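/- arXiv:2202.04452 — 7 statements merged into one kernel-verified Lean document; each statement's English description precedes it below -/
import Mathlib

section
/- Let K be a finite extension of ℚ_p of degree d and let α ∈ K with α not in the ring of integers O_K. Then β = α⁻¹ lies in O_K, and if the characteristic polynomial of β over ℚ_p is a_d x^d + a_{d-1} x^{d-1} + ⋯ + a_1 x + a_0 ∈ ℤ_p[x], then a_d = 1 and a_i ∈ pℤ_p for all i = 0, 1, …, d−1. -/
/-!
Let `‖·‖` be the spectral norm on `K`, i.e. the unique extension of the `p`-adic norm, read off
from minimal polynomials; it is multiplicative because `ℚ_p` is complete. An element is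
integral over `ℤ_p` exactly when the coefficients of its minimal polynomial over `ℚ_p` lie in
`ℤ_p`, i.e. when its spectral norm is at most `1`. Hence `‖α‖ > 1`, so `‖α⁻¹‖ < 1`: then `α⁻¹` is
integral and every non-leading coefficient of its minimal polynomial `g` has norm `< 1`, i.e.
lies in `pℤ_p`. The characteristic polynomial of `α⁻¹` is `g ^ [K : ℚ_p(α⁻¹)]`, and this
property of the coefficients is preserved under products.
-/

open Polynomial IntermediateField Module

theorem Polynomial.IsWeaklyEisensteinAt.pow {R : Type*} [CommSemiring R] {𝓟 : Ideal R}
    {f : R[X]} (hf : f.IsWeaklyEisensteinAt 𝓟) (n : ℕ) : (f ^ n).IsWeaklyEisensteinAt 𝓟 := by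
  induction n with
  | zero => exact ⟨fun hn => by simp at hn⟩
  | succ n ih => rw [pow_succ]; exact ih.mul hf

theorem Polynomial.norm_coeff_lt_one_of_spectralValue_lt_one {R : Type*} [SeminormedRing R]
    {P : R[X]} (hP : spectralValue P < 1) {n : ℕ} (hn : n < P.natDegree) : ‖P.coeff n‖ < 1 := by
  have hterm : spectralValueTerms P n < 1 :=
    (le_ciSup (spectralValueTerms_bddAbove P) n).trans_lt hP
  rw [spectralValueTerms_of_lt_natDegree P hn] at hterm
  contrapose! hterm
  exact Real.one_le_rpow hterm (one_div_nonneg.mpr (sub_nonneg.mpr (by exact_mod_cast hn.le)))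

theorem Matrix.charpoly_blockDiagonal_const {R m o : Type*} [CommRing R] [DecidableEq m]
    [Fintype m] [DecidableEq o] [Fintype o] (M : Matrix m m R) :
    (blockDiagonal fun _ : o => M).charpoly = M.charpoly ^ Fintype.card o := by
  have : charmatrix (blockDiagonal fun _ : o => M) = blockDiagonal fun _ => charmatrix M := by
    ext ⟨i, k⟩ ⟨j, l⟩
    simp only [charmatrix_apply, blockDiagonal_apply, diagonal_apply, Prod.mk.injEq]
    split_ifs <;> simp_all
  rw [charpoly, this, det_blockDiagonal, Finset.prod_const, Finset.card_univ, charpoly]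

/-- In a basis of `E` over `F` built from a power basis of `F⟮x⟯` and a basis of `E` over `F⟮x⟯`,
multiplication by `x` is block diagonal with companion matrices of `minpoly F x` as blocks. -/
theorem LinearMap.charpoly_mulLeft_eq_minpoly_pow {F E : Type*} [Field F] [Field E]
    [Algebra F E] [FiniteDimensional F E] (x : E) :
    (LinearMap.mulLeft F x).charpoly = minpoly F x ^ finrank F⟮x⟯ E := by
  classical
  let pb := adjoin.powerBasis (Algebra.IsIntegral.isIntegral (R := F) x)
  let B := pb.basis.smulTower (Module.finBasis F⟮x⟯ E)
  have hx : x = algebraMap F⟮x⟯ E pb.gen := (AdjoinSimple.algebraMap_gen F x).symm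
  rw [← LinearMap.charpoly_toMatrix _ B]
  change (Algebra.leftMulMatrix B x).charpoly = _
  rw [congrArg (Algebra.leftMulMatrix B) hx, Algebra.smulTower_leftMulMatrix_algebraMap,
    Matrix.charpoly_blockDiagonal_const, charpoly_leftMulMatrix, Fintype.card_fin,
    ← minpoly.algebraMap_eq (algebraMap F⟮x⟯ E).injective, ← hx]

namespace PadicInt

variable {p : ℕ} [Fact p.Prime] {K : Type*} [Field K] [Algebra ℚ_[p] K] [Algebra ℤ_[p] K]
  [IsScalarTower ℤ_[p] ℚ_[p] K]

theorem isIntegral_iff_spectralNorm_le_one {x : K} (hx : IsIntegral ℚ_[p] x) :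
    IsIntegral ℤ_[p] x ↔ spectralNorm ℚ_[p] K x ≤ 1 := by
  rw [spectralNorm, spectralValue_le_one_iff (minpoly.monic hx)]
  constructor
  · intro hint n
    rw [minpoly.isIntegrallyClosed_eq_field_fractions' ℚ_[p] hint, coeff_map]
    exact norm_le_one _
  · intro hcoeff
    have hlifts : minpoly ℚ_[p] x ∈ lifts (algebraMap ℤ_[p] ℚ_[p]) :=
      (lifts_iff_coeff_lifts _).mpr fun n => ⟨⟨_, hcoeff n⟩, rfl⟩
    obtain ⟨f, hf, -, hmonic⟩ := lifts_and_natDegree_eq_and_monic hlifts (minpoly.monic hx)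
    exact ⟨f, hmonic, by rw [← aeval_def, ← aeval_map_algebraMap ℚ_[p], hf, minpoly.aeval]⟩

theorem isWeaklyEisensteinAt_minpoly_of_spectralNorm_lt_one {x : K} (hx : IsIntegral ℤ_[p] x)
    (hnorm : spectralNorm ℚ_[p] K x < 1) :
    (minpoly ℤ_[p] x).IsWeaklyEisensteinAt (Ideal.span {(p : ℤ_[p])}) := by
  refine ⟨fun {n} hn => ?_⟩
  have hmap := minpoly.isIntegrallyClosed_eq_field_fractions' ℚ_[p] hx
  have hcoeff := norm_coeff_lt_one_of_spectralValue_lt_one hnorm (n := n)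
    (by rwa [hmap, (minpoly.monic hx).natDegree_map])
  rw [hmap, coeff_map] at hcoeff
  rwa [Ideal.mem_span_singleton, ← norm_lt_one_iff_dvd]

theorem spectralNorm_inv_lt_one_of_not_isIntegral [Algebra.IsAlgebraic ℚ_[p] K] {α : K}
    (hα : ¬ IsIntegral ℤ_[p] α) : spectralNorm ℚ_[p] K α⁻¹ < 1 := by
  have hα0 : α ≠ 0 := by rintro rfl; exact hα isIntegral_zero
  have hnorm : 1 < spectralNorm ℚ_[p] K α := by
    rwa [← not_le, ← isIntegral_iff_spectralNorm_le_one (Algebra.IsIntegral.isIntegral α)]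
  have hmul : spectralNorm ℚ_[p] K α * spectralNorm ℚ_[p] K α⁻¹ = 1 := by
    rw [← spectralAlgNorm_def, ← spectralAlgNorm_def, ← spectralAlgNorm_mul, mul_inv_cancel₀ hα0,
      spectralAlgNorm_one]
  nlinarith [spectralNorm_nonneg (K := ℚ_[p]) α⁻¹]

end PadicInt

/-- Let `K` be a finite extension of `ℚ_p` of degree `d` and `α ∈ K` not integral
over `ℤ_p`. Then `β = α⁻¹` is integral over `ℤ_p`, and the characteristic polynomial
`a_d x^d + ⋯ + a_0 ∈ ℤ_p[x]` of multiplication by `β` on `K` satisfies `a_d = 1` and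
`a_i ∈ pℤ_p` (equivalently `‖a_i‖ < 1`) for all `i < d`. -/
theorem charpoly_of_nonintegral_inverse (p : ℕ) [Fact p.Prime]
    (K : Type*) [Field K] [Algebra ℚ_[p] K] [FiniteDimensional ℚ_[p] K]
    [Algebra ℤ_[p] K] [IsScalarTower ℤ_[p] ℚ_[p] K]
    (d : ℕ) (hd : d = Module.finrank ℚ_[p] K)
    (α : K) (hα : ¬ IsIntegral ℤ_[p] α) :
    IsIntegral ℤ_[p] (α⁻¹) ∧
      (LinearMap.mulLeft ℚ_[p] (α⁻¹)).charpoly.coeff d = 1 ∧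
      ∀ i < d, ∃ a : ℤ_[p], (LinearMap.mulLeft ℚ_[p] (α⁻¹)).charpoly.coeff i = (a : ℚ_[p])
        ∧ a ∈ Ideal.span {(p : ℤ_[p])} := by
  have hsmall := PadicInt.spectralNorm_inv_lt_one_of_not_isIntegral hα
  have hint : IsIntegral ℤ_[p] α⁻¹ :=
    (PadicInt.isIntegral_iff_spectralNorm_le_one (Algebra.IsIntegral.isIntegral _)).mpr hsmall.le
  have hχdeg : (LinearMap.mulLeft ℚ_[p] α⁻¹).charpoly.natDegree = d := by
    rw [hd, LinearMap.charpoly_natDegree]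
  set f := minpoly ℤ_[p] α⁻¹ ^ finrank ℚ_[p]⟮α⁻¹⟯ K
  have hχ : (LinearMap.mulLeft ℚ_[p] α⁻¹).charpoly = f.map (algebraMap ℤ_[p] ℚ_[p]) := by
    rw [LinearMap.charpoly_mulLeft_eq_minpoly_pow, Polynomial.map_pow,
      minpoly.isIntegrallyClosed_eq_field_fractions' ℚ_[p] hint]
  have hfdeg : f.natDegree = d := by
    rw [← hχdeg, hχ, ((minpoly.monic hint).pow _).natDegree_map]
  have hf := (PadicInt.isWeaklyEisensteinAt_minpoly_of_spectralNorm_lt_one hint hsmall).pow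
    (finrank ℚ_[p]⟮α⁻¹⟯ K)
  refine ⟨hint, hχdeg ▸ (LinearMap.charpoly_monic _).coeff_natDegree, fun i hi => ?_⟩
  exact ⟨f.coeff i, by rw [hχ, coeff_map]; rfl, hf.mem (hfdeg ▸ hi)⟩
end

section
/- Let p be a prime, K a finite Galois extension of ℚ_p of degree d, α ∈ K with α ∉ O_K, and β a Galois conjugate of α. Let b_1, b_2 ∈ ℤ_p with b_1 + b_2 ≠ 0. Then for every integer ℓ ≥ 0 there exists i ∈ {1, 2, …, d} such that b_1 α^{ℓ+i} + b_2 β^{ℓ+i} ≠ 0. -/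
/-! Since `α` is not integral, `α` and `β = σ α` are nonzero. If the terms at exponents `n`
and `n + 1` both vanish, then `b₂ β ^ n (β - α) = 0`. Here `b₂ = 0` would leave `b₁ α ^ n = 0`
with `b₁ = b₁ + b₂ ≠ 0`, so `β = α`, and then `(b₁ + b₂) α ^ n = 0` is impossible.
Hence the window `{1, 2}` suffices when `β ≠ α`, and then `σ ≠ id` forces `d ≥ 2`;
when `β = α` the exponent `ℓ + 1` alone works. -/

theorem AlgEquiv.apply_eq_self_of_finrank_eq_one {F K : Type*} [Field F] [Ring K] [Nontrivial K]
    [Algebra F K] (h : Module.finrank F K = 1) (σ : K ≃ₐ[F] K) (x : K) : σ x = x := by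
  have hx : x ∈ (⊥ : Subalgebra F K) := Subalgebra.bot_eq_top_of_finrank_eq_one h ▸ Algebra.mem_top
  obtain ⟨c, rfl⟩ := Algebra.mem_bot.mp hx
  exact σ.commutes c

theorem AlgEquiv.one_lt_finrank_of_apply_ne {F K : Type*} [Field F] [Ring K] [Nontrivial K]
    [Algebra F K] [FiniteDimensional F K] {σ : K ≃ₐ[F] K} {x : K} (h : σ x ≠ x) :
    1 < Module.finrank F K := by
  by_contra! hle
  exact h (σ.apply_eq_self_of_finrank_eq_one (le_antisymm hle Module.finrank_pos) x)

section TwoTermPowerSums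

variable {R A : Type*} [CommRing R] [IsDomain R] [CommRing A] [IsDomain A] [Algebra R A]
  [Module.IsTorsionFree R A] {b₁ b₂ : R} {α β : A}

theorem smul_pow_add_smul_pow_self_ne_zero (hb : b₁ + b₂ ≠ 0) (hα : α ≠ 0) (n : ℕ) :
    b₁ • α ^ n + b₂ • α ^ n ≠ 0 := by
  rw [← add_smul]
  exact smul_ne_zero hb (pow_ne_zero n hα)

theorem smul_pow_add_smul_pow_ne_zero_or_succ (hb : b₁ + b₂ ≠ 0) (hα : α ≠ 0) (hβ : β ≠ 0)
    (n : ℕ) : b₁ • α ^ n + b₂ • β ^ n ≠ 0 ∨ b₁ • α ^ (n + 1) + b₂ • β ^ (n + 1) ≠ 0 := by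
  by_contra! ⟨h₀, h₁⟩
  have key : b₂ • (β ^ n * (β - α)) = 0 := by
    simp only [Algebra.smul_def] at h₀ h₁ ⊢
    linear_combination h₁ - α * h₀
  rcases smul_eq_zero.mp key with rfl | hprod
  · rw [zero_smul, add_zero, smul_eq_zero] at h₀
    rcases h₀ with rfl | hαn
    · exact hb (add_zero 0)
    · exact pow_ne_zero n hα hαn
  · rcases mul_eq_zero.mp hprod with hβn | hβα
    · exact pow_ne_zero n hβ hβn
    · rw [sub_eq_zero.mp hβα] at h₀
      exact smul_pow_add_smul_pow_self_ne_zero hb hα n h₀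

end TwoTermPowerSums

theorem nonvanishing_in_window_general (p : ℕ) [Fact p.Prime]
    (K : Type*) [Field K] [Algebra ℚ_[p] K] [FiniteDimensional ℚ_[p] K]
    [Algebra ℤ_[p] K] [IsScalarTower ℤ_[p] ℚ_[p] K]
    (d : ℕ) (hd : d = Module.finrank ℚ_[p] K)
    (α : K) (hα : ¬ IsIntegral ℤ_[p] α) (σ : K ≃ₐ[ℚ_[p]] K) (β : K) (hβ : β = σ α)
    (b₁ b₂ : ℤ_[p]) (hb : b₁ + b₂ ≠ 0) :
    ∀ ℓ : ℕ, ∃ i ∈ Finset.Icc 1 d, b₁ • α ^ (ℓ + i) + b₂ • β ^ (ℓ + i) ≠ 0 := by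
  have : Module.IsTorsionFree ℤ_[p] K := .trans_faithfulSMul ℤ_[p] ℚ_[p] K
  have hα₀ : α ≠ 0 := by
    rintro rfl
    exact hα isIntegral_zero
  have hβ₀ : β ≠ 0 := hβ ▸ (map_ne_zero σ).mpr hα₀
  intro ℓ
  obtain rfl | hβα := eq_or_ne β α
  · have hd₁ : 1 ≤ d := hd ▸ Module.finrank_pos
    exact ⟨1, Finset.mem_Icc.mpr ⟨le_rfl, hd₁⟩, smul_pow_add_smul_pow_self_ne_zero hb hα₀ _⟩
  · have hd₂ : 2 ≤ d := hd ▸ σ.one_lt_finrank_of_apply_ne (hβ ▸ hβα)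
    rcases smul_pow_add_smul_pow_ne_zero_or_succ hb hα₀ hβ₀ (ℓ + 1) with h | h
    · exact ⟨1, Finset.mem_Icc.mpr ⟨le_rfl, by omega⟩, h⟩
    · exact ⟨2, Finset.mem_Icc.mpr ⟨one_le_two, hd₂⟩, h⟩

/-- Let `K` be a finite Galois extension of `ℚ_p` of degree `d`, `α ∈ K` not integral
over `ℤ_p`, `β = σ(α)` a Galois conjugate of `α`, and `b₁, b₂ ∈ ℤ_p` with
`b₁ + b₂ ≠ 0`. Then for every `ℓ ≥ 0` there is `i ∈ {1, …, d}` with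
`b₁ α^{ℓ+i} + b₂ β^{ℓ+i} ≠ 0`. -/
theorem nonvanishing_in_window (p : ℕ) [Fact p.Prime]
    (K : Type*) [Field K] [Algebra ℚ_[p] K] [FiniteDimensional ℚ_[p] K]
    [IsGalois ℚ_[p] K] [Algebra ℤ_[p] K] [IsScalarTower ℤ_[p] ℚ_[p] K]
    (d : ℕ) (hd : d = Module.finrank ℚ_[p] K)
    (α : K) (hα : ¬ IsIntegral ℤ_[p] α) (σ : K ≃ₐ[ℚ_[p]] K) (β : K) (hβ : β = σ α)
    (b₁ b₂ : ℤ_[p]) (hb : b₁ + b₂ ≠ 0) :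
    ∀ ℓ : ℕ, ∃ i ∈ Finset.Icc 1 d, b₁ • α ^ (ℓ + i) + b₂ • β ^ (ℓ + i) ≠ 0 :=
  nonvanishing_in_window_general p K d hd α hα σ β hβ b₁ b₂ hb
end

section
/- (Fatou's lemma over number fields) Let K be a number field with ring of integers O_K, and let f be a formal power series with all coefficients in O_K which equals a rational function g(x)/h(x) with g, h ∈ K[x] coprime and h(0) = 1. Then g and h both have all coefficients in O_K. -/
open PowerSeries IsDedekindDomain NumberField
open scoped Polynomial

/-!
Pass to the splitting field `L` of `h` and fix a finite place `w` of `L`. A root `β` of `h` with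
`w β < 1` is impossible: with `f = g / h`, the polynomial `g - h · trunc_N f` is divisible by
`X ^ N` and its coefficients are bounded independently of `N`, so `w (g β) ≤ C · w β ^ N` for all
`N`, forcing `g β = 0` against coprimality. Hence `h = ∏ (1 - β⁻¹ X)` has `w`-integral
coefficients, and so does `g = h f`. Integral at every finite place of `L`, the coefficients of
`g` and `h` are algebraic integers.
-/

theorem eq_zero_of_forall_le_mul_pow {Γ₀ : Type*} [LinearOrderedCommGroupWithZero Γ₀]
    [MulArchimedean Γ₀] {a c u : Γ₀} (hu : u < 1) (h : ∀ N : ℕ, a ≤ c * u ^ N) : a = 0 := by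
  by_contra ha
  have hc : c ≠ 0 := by rintro rfl; simpa [ha] using h 0
  obtain ⟨N, hN⟩ := exists_pow_lt₀ hu (Units.mk0 (a / c) (div_ne_zero ha hc))
  have := (h N).trans_lt (mul_lt_mul_of_pos_left hN (zero_lt_iff.2 hc))
  simp [mul_div_cancel₀ _ hc] at this

theorem Polynomial.Splits.eq_prod_one_sub_inv_roots_mul_X {L : Type*} [Field L] {p : L[X]}
    (hp : p.Splits) (h0 : p.coeff 0 = 1) :
    p = (p.roots.map fun a => 1 - Polynomial.C a⁻¹ * Polynomial.X).prod := by
  have hroot_ne : ∀ a ∈ p.roots, a ≠ 0 := by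
    rintro a ha rfl
    simpa [← Polynomial.coeff_zero_eq_eval_zero, h0] using (Polynomial.mem_roots'.1 ha).2
  have hlin : ∀ a ∈ p.roots, Polynomial.X - Polynomial.C a =
      Polynomial.C (-a) * (1 - Polynomial.C a⁻¹ * Polynomial.X) := fun a ha => by
    rw [mul_sub, ← mul_assoc, ← Polynomial.C_mul, neg_mul, mul_inv_cancel₀ (hroot_ne a ha)]
    simp only [map_neg, Polynomial.C_1]
    ring
  set P := (p.roots.map fun a => 1 - Polynomial.C a⁻¹ * Polynomial.X).prod
  have hfac : p = Polynomial.C (p.leadingCoeff * (p.roots.map fun a => -a).prod) * P := by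
    conv_lhs => rw [hp.eq_prod_roots]
    rw [Multiset.map_congr rfl hlin, Multiset.prod_map_mul, Polynomial.C_mul, mul_assoc,
      map_multiset_prod, Multiset.map_map]
    rfl
  have hc : p.leadingCoeff * (p.roots.map fun a => -a).prod = 1 := by
    simpa [P, Polynomial.eval_multiset_prod, ← Polynomial.coeff_zero_eq_eval_zero, h0]
      using (congrArg (Polynomial.eval 0) hfac).symm
  rwa [hc, Polynomial.C_1, one_mul] at hfac

namespace Valuation

variable {L Γ₀ : Type*} [Field L] [LinearOrderedCommGroupWithZero Γ₀] (w : Valuation L Γ₀)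

theorem exists_forall_coeff_le (p : L[X]) : ∃ C, ∀ i, w (p.coeff i) ≤ C := by
  obtain ⟨C, hC⟩ := (p.support.image fun i => w (p.coeff i)).bddAbove
  refine ⟨C, fun i => ?_⟩
  by_cases hi : i ∈ p.support
  · exact hC (Finset.mem_coe.2 (Finset.mem_image_of_mem _ hi))
  · simp [Polynomial.notMem_support_iff.1 hi]

theorem map_eval_le {p : L[X]} {C : Γ₀} (hp : ∀ i, w (p.coeff i) ≤ C) {β : L} (hβ : w β ≤ 1) :
    w (p.eval β) ≤ C := by
  rw [Polynomial.eval_eq_sum_range]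
  refine w.map_sum_le fun i _ => ?_
  rw [map_mul, map_pow]
  exact mul_le_of_le_of_le_one (hp i) (pow_le_one' hβ i)

theorem map_eval_le_mul_pow {p : L[X]} {N : ℕ} (hdvd : Polynomial.X ^ N ∣ p) {C : Γ₀}
    (hp : ∀ i, w (p.coeff i) ≤ C) {β : L} (hβ : w β ≤ 1) :
    w (p.eval β) ≤ C * w β ^ N := by
  obtain ⟨q, rfl⟩ := hdvd
  rw [Polynomial.eval_mul, Polynomial.eval_X_pow, map_mul, map_pow, mul_comm]
  gcongr
  exact w.map_eval_le (fun i => by simpa only [Polynomial.coeff_X_pow_mul] using hp (i + N)) hβ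

theorem map_coeff_mul_le {φ ψ : L⟦X⟧} {C D : Γ₀} (hφ : ∀ i, w (coeff i φ) ≤ C)
    (hψ : ∀ i, w (coeff i ψ) ≤ D) (n : ℕ) : w (coeff n (φ * ψ)) ≤ C * D := by
  rw [coeff_mul]
  exact w.map_sum_le fun ij _ => (map_mul w _ _).trans_le (mul_le_mul' (hφ _) (hψ _))

theorem one_le_of_isRoot [MulArchimedean Γ₀] {g h : L[X]} (hcop : IsCoprime g h) {f : L⟦X⟧}
    (hf : ∀ n, w (coeff n f) ≤ 1) (hgh : (g : L⟦X⟧) = h * f) {β : L} (hβ : h.IsRoot β) :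
    1 ≤ w β := by
  by_contra! hlt
  have hgβ : g.eval β ≠ 0 := by
    simpa [hβ.eq_zero] using Polynomial.aeval_ne_zero_of_isCoprime hcop β
  obtain ⟨C, hC⟩ := w.exists_forall_coeff_le h
  refine hgβ (w.zero_iff.1 (eq_zero_of_forall_le_mul_pow (c := C) hlt fun N => ?_))
  set r := g - h * trunc N f
  have hr : (r : L⟦X⟧) = X ^ N * ((h : L⟦X⟧) * PowerSeries.mk fun i => coeff (i + N) f) := by
    rw [Polynomial.coe_sub, Polynomial.coe_mul, hgh]
    linear_combination (h : L⟦X⟧) * eq_X_pow_mul_shift_add_trunc N f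
  have hdvd : Polynomial.X ^ N ∣ r := Polynomial.X_pow_dvd_iff.2 fun d hd => by
    rw [← Polynomial.coeff_coe, hr]
    exact PowerSeries.X_pow_dvd_iff.1 (dvd_mul_right _ _) d hd
  have hrC : ∀ i, w (r.coeff i) ≤ C := fun i => by
    rw [← Polynomial.coeff_coe, hr, mul_comm, coeff_mul_X_pow', ← mul_one C]
    split_ifs
    · exact w.map_coeff_mul_le (by simpa using hC) (by simpa using fun j => hf (j + N)) _
    · simp
  calc w (g.eval β) = w (r.eval β) := by simp [r, hβ.eq_zero]
    _ ≤ C * w β ^ N := w.map_eval_le_mul_pow hdvd hrC hlt.le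

theorem coeff_le_one_of_splits {p : L[X]} (hp : p.Splits) (h0 : p.coeff 0 = 1)
    (hroots : ∀ β ∈ p.roots, 1 ≤ w β) (i : ℕ) : w (p.coeff i) ≤ 1 := by
  have hlifts : p ∈ Polynomial.lifts w.integer.subtype := by
    rw [hp.eq_prod_one_sub_inv_roots_mul_X h0, Polynomial.lifts_iff_liftsRing]
    refine Subring.multiset_prod_mem _ _ fun q hq => ?_
    obtain ⟨β, hβ, rfl⟩ := Multiset.mem_map.1 hq
    have hβ_inv : β⁻¹ ∈ w.integer := by
      rw [w.mem_integer_iff, map_inv₀]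
      exact inv_le_one_of_one_le₀ (hroots β hβ)
    exact Subring.sub_mem _ (Subring.one_mem _) (Subring.mul_mem _
      (Polynomial.C'_mem_lifts ⟨⟨β⁻¹, hβ_inv⟩, rfl⟩) (Polynomial.X_mem_lifts _))
  obtain ⟨x, hx⟩ := (Polynomial.lifts_iff_coeff_lifts p).1 hlifts i
  exact hx ▸ x.2

theorem coeff_le_one_of_isCoprime_of_splits [MulArchimedean Γ₀] {g h : L[X]}
    (hcop : IsCoprime g h) (hsplit : h.Splits) (h0 : h.coeff 0 = 1) {f : L⟦X⟧}
    (hf : ∀ n, w (coeff n f) ≤ 1) (hgh : (g : L⟦X⟧) = h * f) :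
    (∀ n, w (g.coeff n) ≤ 1) ∧ ∀ n, w (h.coeff n) ≤ 1 := by
  have hh : ∀ n, w (h.coeff n) ≤ 1 := w.coeff_le_one_of_splits hsplit h0 fun β hβ =>
    w.one_le_of_isRoot hcop hf hgh (Polynomial.isRoot_of_mem_roots hβ)
  refine ⟨fun n => ?_, hh⟩
  rw [← Polynomial.coeff_coe, hgh, ← mul_one 1]
  exact w.map_coeff_mul_le (by simpa using hh) hf n

end Valuation

theorem NumberField.isIntegral_iff_forall_valuation_le_one {L : Type*} [Field L] [NumberField L]
    {x : L} : IsIntegral ℤ x ↔ ∀ v : HeightOneSpectrum (𝓞 L), v.valuation L x ≤ 1 := by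
  refine ⟨fun hx v => v.valuation_le_one (⟨x, hx⟩ : 𝓞 L), fun h => ?_⟩
  obtain ⟨r, rfl⟩ := HeightOneSpectrum.mem_integers_of_valuation_le_one L x h
  exact r.isIntegral_coe

/-- (Fatou's lemma over number fields) Let `K` be a number field, and `g, h ∈ K[x]`
coprime with `h(0) = 1`, such that the power series expansion of `g/h` has all its
coefficients in `O_K`. Then all coefficients of `g` and `h` lie in `O_K`. -/
theorem fatou_lemma (K : Type*) [Field K] [NumberField K]
    (g h : Polynomial K) (hcop : IsCoprime g h) (h0 : h.coeff 0 = 1)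
    (hint : ∀ n : ℕ, IsIntegral ℤ
      ((PowerSeries.coeff n) ((g : PowerSeries K) * (h : PowerSeries K)⁻¹))) :
    (∀ n : ℕ, IsIntegral ℤ (g.coeff n)) ∧ (∀ n : ℕ, IsIntegral ℤ (h.coeff n)) := by
  set f := (g : K⟦X⟧) * (h : K⟦X⟧)⁻¹
  have hgh : (g : K⟦X⟧) = h * f := by
    rw [mul_left_comm, PowerSeries.mul_inv_cancel _ (by simp [h0]), mul_one]
  let L := h.SplittingField
  have : NumberField L := NumberField.of_module_finite K L
  let σ := algebraMap K L
  have hgh_L : ((g.map σ : L[X]) : L⟦X⟧) = (h.map σ : L[X]) * PowerSeries.map σ f := by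
    simpa using congrArg (PowerSeries.map σ) hgh
  have hf_L (n : ℕ) : IsIntegral ℤ (coeff n (PowerSeries.map σ f)) := by
    simpa using (hint n).map σ.toIntAlgHom
  have hlocal (v : HeightOneSpectrum (𝓞 L)) :=
    (v.valuation L).coeff_le_one_of_isCoprime_of_splits (hcop.map (Polynomial.mapRingHom σ))
      (Polynomial.SplittingField.splits h) (by simp [h0])
      (fun n => isIntegral_iff_forall_valuation_le_one.1 (hf_L n) v) hgh_L
  have hdescend (x : K) (hx : ∀ v : HeightOneSpectrum (𝓞 L), v.valuation L (σ x) ≤ 1) :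
      IsIntegral ℤ x :=
    (isIntegral_algebraMap_iff σ.injective).1 (isIntegral_iff_forall_valuation_le_one.2 hx)
  exact ⟨fun n => hdescend _ fun v => by simpa using (hlocal v).1 n,
    fun n => hdescend _ fun v => by simpa using (hlocal v).2 n⟩
end

section
/- Let K be a number field, h ∈ O_K[[x]] an invertible power series (h(0) = 1) such that some nonzero constant c ∈ O_K satisfies c/h(x) ∈ O_K[[x]], and suppose h(x) = ∏_{i=1}^k (1 − a_i x)^{c_i} with a_i distinct algebraic numbers and c_i ≥ 1. Then each a_i is an algebraic integer. -/
open Polynomial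

/-!
Since `h(0) = 1`, the reversed polynomial `x ^ deg h * h(1/x)` is monic with algebraic integer
coefficients, and each `a_i ≠ 0` is a root of it because `1 / a_i` is a root of `h`.
-/

namespace Polynomial

theorem monic_reverse_of_coeff_zero_eq_one {R : Type*} [Semiring R] {p : R[X]}
    (hp : p.coeff 0 = 1) : p.reverse.Monic := by
  nontriviality R
  rw [Monic, reverse_leadingCoeff, trailingCoeff_eq_coeff_zero (hp ▸ one_ne_zero), hp]

theorem eval₂_reverse_eq_zero_of_one_sub_C_mul_X_dvd {R L : Type*} [Semiring R] [Field L]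
    {f : R →+* L} {p : R[X]} {a : L} (ha : a ≠ 0) (hdvd : 1 - C a * X ∣ p.map f) :
    p.reverse.eval₂ f a = 0 := by
  let : Invertible a⁻¹ := invertibleOfNonzero (inv_ne_zero ha)
  have hinv : ⅟a⁻¹ = a := by simp
  rw [← hinv, eval₂_reverse_eq_zero_iff, ← eval_map]
  obtain ⟨q, hq⟩ := hdvd
  simp [hq, mul_inv_cancel₀ ha]

end Polynomial

theorem IsIntegral.of_aeval_eq_zero_of_monic_of_isIntegral_coeff {R K L : Type*} [CommRing R]
    [CommRing K] [CommRing L] [Algebra R K] [Algebra K L] [Algebra R L] [IsScalarTower R K L]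
    {q : K[X]} (hq : q.Monic) (hcoeff : ∀ n, IsIntegral R (q.coeff n)) {x : L}
    (hx : aeval x q = 0) : IsIntegral R x := by
  nontriviality L
  have hdeg : (q.map (algebraMap K L)).natDegree ≠ 0 := fun hdeg => by
    rw [aeval_def, eval₂_eq_eval_map, (hq.map _).natDegree_eq_zero.mp hdeg] at hx
    simp at hx
  refine .of_aeval_monic_of_isIntegral_coeff (hq.map _) hdeg ?_ fun n => ?_
  · rw [eval_map_algebraMap, hx]
    exact isIntegral_zero
  · rw [coeff_map]
    exact (hcoeff n).algebraMap

theorem roots_of_integral_inverse_denominator_general (K L : Type*) [Field K]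
    [Field L] [Algebra K L]
    (h : Polynomial K) (hhint : ∀ n : ℕ, IsIntegral ℤ (h.coeff n)) (h0 : h.coeff 0 = 1)
    (k : ℕ) (a : Fin k → L) (e : Fin k → ℕ)
    (he : ∀ i, 1 ≤ e i)
    (hfact : h.map (algebraMap K L) = ∏ i, (1 - Polynomial.C (a i) * Polynomial.X) ^ e i) :
    ∀ i, IsIntegral ℤ (a i) := by
  intro i
  rcases eq_or_ne (a i) 0 with hzero | hne
  · rw [hzero]
    exact isIntegral_zero
  have hdvd : 1 - C (a i) * X ∣ h.map (algebraMap K L) :=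
    hfact ▸ (dvd_pow_self _ (Nat.one_le_iff_ne_zero.mp (he i))).trans (Finset.dvd_prod_of_mem _ (Finset.mem_univ i))
  refine .of_aeval_eq_zero_of_monic_of_isIntegral_coeff (K := K)
    (monic_reverse_of_coeff_zero_eq_one h0) (fun n => ?_)
    (eval₂_reverse_eq_zero_of_one_sub_C_mul_X_dvd hne hdvd)
  rw [coeff_reverse]
  exact hhint _

/-- Let `K` be a number field and `h ∈ K[x]` with all coefficients in `O_K` and
`h(0) = 1`, such that `c / h(x) ∈ O_K[[x]]` for some nonzero `c ∈ O_K`. If over an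
extension `L` one has `h(x) = ∏ (1 − a_i x)^{c_i}` with the `a_i` distinct and
`c_i ≥ 1`, then each `a_i` is an algebraic integer. -/
theorem roots_of_integral_inverse_denominator (K L : Type*) [Field K] [NumberField K]
    [Field L] [Algebra K L]
    (h : Polynomial K) (hhint : ∀ n : ℕ, IsIntegral ℤ (h.coeff n)) (h0 : h.coeff 0 = 1)
    (c : K) (hc : c ≠ 0) (hcint : IsIntegral ℤ c)
    (hdiv : ∀ n : ℕ, IsIntegral ℤ
      ((PowerSeries.coeff (R := K) n) ((PowerSeries.C (R := K) c) * ((h : PowerSeries K))⁻¹)))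
    (k : ℕ) (a : Fin k → L) (ha : Function.Injective a) (e : Fin k → ℕ)
    (he : ∀ i, 1 ≤ e i)
    (hfact : h.map (algebraMap K L) = ∏ i, (1 - Polynomial.C (a i) * Polynomial.X) ^ e i) :
    ∀ i, IsIntegral ℤ (a i) :=
  roots_of_integral_inverse_denominator_general K L h hhint h0 k a e he hfact
end

section
/- Let α be a nonzero algebraic number of degree k ≥ 2 and K the Galois closure of ℚ(α) with [K:ℚ] = d. If there is a positive integer q such that Tr_{K/ℚ}(α^j) ∈ (1/q)ℤ for all j = 1, 2, …, d + d·⌊log₂(q d)⌋ + 1, then α is an algebraic integer. -/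
/-!
If `α` is not integral, some prime `v` of `K` has `|α|_v > 1`. Let `σ₀ α` be a conjugate of
largest `v`-adic size and `S` the set of `σ` with `|σ α|_v = |σ₀ α|_v`. The quotients
`u_σ = σ α / σ₀ α`, `σ ∈ S`, are `v`-units, and the remaining conjugates are smaller by at least one
step of the value group, so `Tr (α ^ j) ∈ (1/q)ℤ` forces `|q ∑_{σ ∈ S} u_σ ^ j|_v ≤ exp (-j)`.
The power sums of the `u_σ` satisfy the linear recurrence given by the coefficients of
`∏ (X - u_σ)`, which are `v`-integral with unit constant term; hence smallness of `#S` consecutive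
power sums propagates down to `q ∑_{σ ∈ S} u_σ ^ 0 = q #S`. For exponents beyond `d ⌊log₂ (q d)⌋`
this contradicts `|n|_v ≥ exp (-d ⌊log₂ n⌋)` for positive integers `n`.
-/

open Polynomial Finset WithZero NumberField IsDedekindDomain

theorem Polynomial.sum_coeff_prod_X_sub_C_mul_sum_pow_eq_zero {R ι : Type*} [CommRing R]
    [Nontrivial R] (s : Finset ι) (f : ι → R) (r : ℕ) :
    ∑ n ∈ range (#s + 1), (∏ i ∈ s, (X - C (f i))).coeff n * ∑ i ∈ s, f i ^ (r + n) = 0 := by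
  have hroot (i : ι) (hi : i ∈ s) :
      ∑ n ∈ range (#s + 1), (∏ i ∈ s, (X - C (f i))).coeff n * f i ^ (r + n) = 0 := by
    have heval : (∏ i ∈ s, (X - C (f i))).eval (f i) = 0 :=
      eval_prod s _ (f i) ▸ prod_eq_zero hi (by simp)
    rw [eval_eq_sum_range' (n := #s + 1) (by simp)] at heval
    simp_rw [pow_add, mul_left_comm _ (f i ^ r), ← mul_sum, heval, mul_zero]
  simp_rw [mul_sum]
  rw [sum_comm]
  exact sum_eq_zero hroot

namespace Valuation

section LinearOrderedCommGroupWithZero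

variable {K Γ : Type*} [Field K] [LinearOrderedCommGroupWithZero Γ] (w : Valuation K Γ)

theorem coeff_prod_X_sub_C_le_one {ι : Type*} (s : Finset ι) (f : ι → K)
    (hf : ∀ i ∈ s, w (f i) ≤ 1) (n : ℕ) : w ((∏ i ∈ s, (X - C (f i))).coeff n) ≤ 1 := by
  have hlifts : ∏ i ∈ s, (X - C (f i)) ∈ liftsRing w.integer.subtype :=
    prod_mem fun i hi => sub_mem (X_mem_lifts _) (C_mem_lifts _ (⟨f i, hf i hi⟩ : w.integer))
  obtain ⟨a, ha⟩ := (lifts_iff_coeff_lifts _).mp hlifts n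
  exact ha ▸ a.2

theorem map_le_of_linear_recurrence {n : ℕ} {c a : ℕ → K} (hc₀ : w (c 0) = 1)
    (hc : ∀ i, w (c i) ≤ 1) (hrec : ∀ r, ∑ i ∈ range (n + 1), c i * a (r + i) = 0)
    {R : ℕ} {δ : Γ} (h : ∀ j, R < j → j ≤ R + n → w (a j) ≤ δ) :
    ∀ j ≤ R + n, w (a j) ≤ δ := by
  have step (r : ℕ) (hr : ∀ i < n, w (a (r + (i + 1))) ≤ δ) : w (a r) ≤ δ := by
    have hsplit := hrec r
    rw [sum_range_succ', add_zero] at hsplit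
    calc w (a r) = w (c 0 * a r) := by rw [map_mul, hc₀, one_mul]
      _ ≤ δ := by
        rw [eq_neg_of_add_eq_zero_right hsplit, map_neg]
        refine w.map_sum_le fun i hi => ?_
        rw [map_mul]
        exact mul_le_of_le_one_of_le (hc _) (hr i (mem_range.mp hi))
  intro j hj
  induction hm : R + n - j using Nat.strong_induction_on generalizing j with
  | _ m ih =>
    by_cases hjR : R < j
    · exact h j hjR hj
    · exact step j fun i hi => ih _ (by omega) _ (by omega) rfl

theorem map_card_mul_le_of_sum_pow_mul_le {ι : Type*} (s : Finset ι) {f : ι → K}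
    (hf : ∀ i ∈ s, w (f i) = 1) (y : K) {R : ℕ} {δ : Γ}
    (h : ∀ j, R < j → j ≤ R + #s → w ((∑ i ∈ s, f i ^ j) * y) ≤ δ) :
    w (#s * y) ≤ δ := by
  have hc₀ : w ((∏ i ∈ s, (X - C (f i))).coeff 0) = 1 := by
    simp [coeff_zero_eq_eval_zero, eval_prod, prod_eq_one hf]
  have hrec (r : ℕ) : ∑ n ∈ range (#s + 1),
      (∏ i ∈ s, (X - C (f i))).coeff n * ((∑ i ∈ s, f i ^ (r + n)) * y) = 0 := by
    simp_rw [← mul_assoc, ← sum_mul, sum_coeff_prod_X_sub_C_mul_sum_pow_eq_zero, zero_mul]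
  simpa using w.map_le_of_linear_recurrence hc₀
    (w.coeff_prod_X_sub_C_le_one s f fun i hi => (hf i hi).le) hrec h 0 (Nat.zero_le _)

end LinearOrderedCommGroupWithZero

section WithZeroInt

variable {K ι : Type*} [Field K] [Fintype ι] (w : Valuation K ℤᵐ⁰) (x : ι → K) {i₀ : ι}

theorem map_sum_filter_div_pow_mul_le_exp (hmax : ∀ i, w (x i) ≤ w (x i₀))
    (hgt : 1 < w (x i₀)) {y : K} (hy : w y ≤ 1) (j : ℕ) (ht : w ((∑ i, x i ^ j) * y) ≤ 1) :
    w ((∑ i with w (x i) = w (x i₀), (x i / x i₀) ^ j) * y) ≤ exp (-(j : ℤ)) := by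
  set g := w (x i₀)
  have hg : 0 < g := zero_lt_one.trans hgt
  -- `h` is the largest value below `g`.
  set h := g * exp (-1)
  have hh : h * exp 1 = g := by simp [h]
  have hh₀ : h ≠ 0 := by simp [h, hg.ne']
  have h_one_le : 1 ≤ h := (lt_mul_exp_iff_le hh₀).mp (hh ▸ hgt)
  have hrest : w ((∑ i with ¬w (x i) = g, x i ^ j) * y) ≤ h ^ j := by
    rw [map_mul]
    refine mul_le_of_le_of_le_one (w.map_sum_le fun i hi => ?_) hy
    rw [map_pow]
    refine pow_le_pow_left₀ zero_le ((lt_mul_exp_iff_le hh₀).mp ?_) j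
    exact hh ▸ lt_of_le_of_ne (hmax i) (mem_filter.mp hi).2
  have hsplit : (∑ i with w (x i) = g, (x i / x i₀) ^ j) * y
      = ((∑ i, x i ^ j) * y - (∑ i with ¬w (x i) = g, x i ^ j) * y) / x i₀ ^ j := by
    rw [← sum_filter_add_sum_filter_not univ (fun i => w (x i) = g)]
    simp_rw [div_pow, ← sum_div]
    ring
  calc _ ≤ h ^ j / g ^ j := by
        rw [hsplit, map_div₀, map_pow, div_le_div_iff_of_pos_right (pow_pos hg j)]
        exact (w.map_sub _ _).trans (max_le (ht.trans (one_le_pow₀ h_one_le)) hrest)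
    _ = exp (-(j : ℤ)) := by
        rw [← div_pow, mul_div_cancel_left₀ _ hg.ne', ← exp_nsmul]
        simp

theorem map_card_filter_mul_le_exp (hmax : ∀ i, w (x i) ≤ w (x i₀)) (hgt : 1 < w (x i₀))
    {y : K} (hy : w y ≤ 1) {R : ℕ}
    (ht : ∀ j, R < j → j ≤ R + #{i | w (x i) = w (x i₀)} → w ((∑ i, x i ^ j) * y) ≤ 1) :
    w (#{i | w (x i) = w (x i₀)} * y) ≤ exp (-(R + 1 : ℕ) : ℤ) := by
  refine w.map_card_mul_le_of_sum_pow_mul_le _ (f := fun i => x i / x i₀) (fun i hi => ?_) y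
    (R := R) fun j hj₁ hj₂ => ?_
  · rw [map_div₀, (mem_filter.mp hi).2, div_self (zero_lt_one.trans hgt).ne']
  · exact (w.map_sum_filter_div_pow_mul_le_exp x hmax hgt hy j (ht j hj₁ hj₂)).trans
      (exp_le_exp.mpr (by omega))

end WithZeroInt

end Valuation

theorem IsDedekindDomain.HeightOneSpectrum.valuation_intCast_le_one {R : Type*} [CommRing R]
    [IsDedekindDomain R] (K : Type*) [Field K] [Algebra R K] [IsFractionRing R K]
    (v : HeightOneSpectrum R) (m : ℤ) : v.valuation K m ≤ 1 :=
  map_intCast (algebraMap R K) m ▸ v.valuation_le_one m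

theorem sum_automorphisms_mul_eq_of_trace_eq_div {K : Type*} [Field K] [CharZero K]
    [FiniteDimensional ℚ K] [IsGalois ℚ K] {x : K} {m : ℤ} {q : ℕ} (hq : q ≠ 0)
    (h : Algebra.trace ℚ K x = m / q) : (∑ σ : Gal(K/ℚ), σ x) * q = m := by
  rw [← trace_eq_sum_automorphisms, h, ← map_natCast (algebraMap ℚ K), ← map_mul,
    div_mul_cancel₀ _ (Nat.cast_ne_zero.mpr hq), map_intCast]

namespace NumberField

variable {K : Type*} [Field K] [NumberField K]

theorem exists_one_lt_valuation_of_not_isIntegral {x : K} (hx : ¬IsIntegral ℤ x) :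
    ∃ v : HeightOneSpectrum (𝓞 K), 1 < v.valuation K x := by
  by_contra! h
  obtain ⟨y, rfl⟩ := HeightOneSpectrum.mem_integers_of_valuation_le_one K x h
  exact hx (RingOfIntegers.isIntegral_coe y)

/-- Taking norms, `P ^ k ∣ (n)` gives `p ^ k ∣ n ^ [K:ℚ]` for a prime `p ∣ N(P)`. -/
theorem le_finrank_mul_log_of_pow_dvd_span_natCast {P : Ideal (𝓞 K)} (hP : P ≠ ⊤) {n k : ℕ}
    (hn : n ≠ 0) (hdvd : P ^ k ∣ Ideal.span {(n : 𝓞 K)}) :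
    k ≤ Module.finrank ℚ K * Nat.log 2 n := by
  obtain ⟨p, hp, hpP⟩ := Nat.exists_prime_and_dvd (Ideal.absNorm_eq_one_iff.not.mpr hP)
  have : Fact p.Prime := ⟨hp⟩
  have hpow : p ^ k ∣ n ^ Module.finrank ℚ K := by
    have := map_dvd Ideal.absNorm hdvd
    rw [map_pow, Ideal.absNorm_span_natCast, RingOfIntegers.rank] at this
    exact (pow_dvd_pow_of_dvd hpP k).trans this
  calc k ≤ padicValNat p (n ^ Module.finrank ℚ K) :=
        (padicValNat_dvd_iff_le (pow_ne_zero _ hn)).mp hpow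
    _ = Module.finrank ℚ K * padicValNat p n := padicValNat.pow n _
    _ ≤ Module.finrank ℚ K * Nat.log 2 n := by
        gcongr
        exact (padicValNat_le_nat_log n).trans (Nat.log_anti_left one_lt_two hp.two_le)

theorem exp_neg_finrank_mul_log_le_valuation_natCast (v : HeightOneSpectrum (𝓞 K)) {n : ℕ}
    (hn : n ≠ 0) : exp (-(Module.finrank ℚ K * Nat.log 2 n : ℕ) : ℤ) ≤ v.valuation K n := by
  set B := Module.finrank ℚ K * Nat.log 2 n
  by_contra! hlt
  rw [← map_natCast (algebraMap (𝓞 K) K), HeightOneSpectrum.valuation_of_algebraMap] at hlt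
  have hle : v.intValuation n ≤ exp (-((B + 1 : ℕ) : ℤ)) := by
    refine (lt_mul_exp_iff_le exp_ne_zero).mp ?_
    rwa [← exp_add, Nat.cast_succ, neg_add, neg_add_cancel_right]
  rw [HeightOneSpectrum.intValuation_le_pow_iff_dvd] at hle
  have hB := le_finrank_mul_log_of_pow_dvd_span_natCast v.isPrime.ne_top hn hle
  omega

end NumberField

theorem trace_finite_criterion_q_general (K : Type*) [Field K] [NumberField K] (α : K)
    [Polynomial.IsSplittingField ℚ K (minpoly ℚ α)]
    (d : ℕ) (hd : d = Module.finrank ℚ K)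
    (q : ℕ) (hq : 0 < q)
    (h : ∀ j : ℕ, 1 ≤ j → j ≤ d + d * Nat.log 2 (q * d) + 1 →
      ∃ m : ℤ, Algebra.trace ℚ K (α ^ j) = (m : ℚ) / (q : ℚ)) :
    IsIntegral ℤ α := by
  have : IsGalois ℚ K :=
    IsGalois.of_separable_splitting_field (Algebra.IsSeparable.isSeparable ℚ α)
  by_contra hα
  obtain ⟨v, hv⟩ := exists_one_lt_valuation_of_not_isIntegral hα
  obtain ⟨σ₀, hσ₀⟩ := Finite.exists_max fun σ : Gal(K/ℚ) => v.valuation K (σ α)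
  set c := #{σ : Gal(K/ℚ) | v.valuation K (σ α) = v.valuation K (σ₀ α)}
  have hc_le : c ≤ d := by
    rw [hd, ← IsGalois.card_aut_eq_finrank, Nat.card_eq_fintype_card]
    exact card_le_univ _
  have hc_pos : 0 < c := card_pos.mpr ⟨σ₀, by simp⟩
  have hupper := (v.valuation K).map_card_filter_mul_le_exp (fun σ : Gal(K/ℚ) => σ α) hσ₀
    (hv.trans_le (hσ₀ 1)) (by exact_mod_cast v.valuation_intCast_le_one K q)
    (R := d * Nat.log 2 (q * d)) fun j hj₁ hj₂ => by
      obtain ⟨m, hm⟩ := h j (by omega) (by omega)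
      simp_rw [← map_pow, sum_automorphisms_mul_eq_of_trace_eq_div hq.ne' hm]
      exact v.valuation_intCast_le_one K m
  have hlower := exp_neg_finrank_mul_log_le_valuation_natCast v (n := c * q) (by positivity)
  rw [← hd] at hlower
  have hexp := exp_le_exp.mp (hlower.trans (by push_cast; exact hupper))
  have hlog : d * Nat.log 2 (c * q) ≤ d * Nat.log 2 (q * d) :=
    Nat.mul_le_mul_left d (Nat.log_mono_right (by rw [mul_comm]; gcongr))
  omega

/-- Let `α` be a nonzero algebraic number of degree `k ≥ 2` and `K` the Galois closure
of `ℚ(α)`, of degree `d` over `ℚ`. If `Tr_{K/ℚ}(α^j) ∈ (1/q)ℤ` for some positive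
integer `q` and all `j = 1, …, d + d⌊log₂(qd)⌋ + 1`, then `α` is an algebraic
integer. -/
theorem trace_finite_criterion_q (K : Type*) [Field K] [NumberField K] (α : K)
    (hα : α ≠ 0) (k : ℕ) (hk : 2 ≤ k) (hdeg : (minpoly ℚ α).natDegree = k)
    [Polynomial.IsSplittingField ℚ K (minpoly ℚ α)]
    (d : ℕ) (hd : d = Module.finrank ℚ K)
    (q : ℕ) (hq : 0 < q)
    (h : ∀ j : ℕ, 1 ≤ j → j ≤ d + d * Nat.log 2 (q * d) + 1 →
      ∃ m : ℤ, Algebra.trace ℚ K (α ^ j) = (m : ℚ) / (q : ℚ)) :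
    IsIntegral ℤ α :=
  trace_finite_criterion_q_general K α d hd q hq h
end

section
/- (Polya) Let α be an algebraic number. If Tr_{ℚ(α)/ℚ}(α^n) ∈ ℤ for all natural numbers n ≥ 1, then α is an algebraic integer. -/
/-- (Polya) If `Tr_{ℚ(α)/ℚ}(α^n) ∈ ℤ` for all `n ≥ 1`, then `α` is an algebraic integer. -/
theorem polya_trace_integral (K : Type*) [Field K] [NumberField K] (α : K)
    (hgen : Algebra.adjoin ℚ {α} = ⊤)
    (h : ∀ n : ℕ, 1 ≤ n → ∃ m : ℤ, Algebra.trace ℚ K (α ^ n) = (m : ℚ)) :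
    IsIntegral ℤ α := by
  classical
  have hα : IsIntegral ℚ α := IsIntegral.of_finite ℚ α
  let pb : PowerBasis ℚ K := (Algebra.adjoin.powerBasis hα).map
      ((Subalgebra.equivOfEq _ _ hgen).trans Subalgebra.topEquiv)
  have hpbgen : pb.gen = α := rfl
  have hpb : ∀ i : Fin pb.dim, pb.basis i = α ^ (i : ℕ) := by
    intro i
    rw [pb.basis_eq_pow, hpbgen]
  -- trace of all powers (including 0) is integral
  have htr : ∀ n : ℕ, Algebra.trace ℚ K (α ^ n) ∈ (1 : Submodule ℤ ℚ) := by
    intro n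
    rcases Nat.eq_zero_or_pos n with hn | hn
    · subst hn
      refine Submodule.mem_one.mpr ⟨(Module.finrank ℚ K : ℤ), ?_⟩
      rw [pow_zero, ← map_one (algebraMap ℚ K), Algebra.trace_algebraMap]
      push_cast
      simp
    · rcases h n hn with ⟨m, hm⟩
      exact Submodule.mem_one.mpr ⟨m, by simpa using hm.symm⟩
  have key : ∀ q : Polynomial ℤ,
      Algebra.trace ℚ K (Polynomial.aeval α q) ∈ (1 : Submodule ℤ ℚ) := by
    intro q
    rw [Polynomial.aeval_eq_sum_range, map_sum]
    refine Submodule.sum_mem _ fun i _ => ?_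
    rw [map_zsmul]
    exact Submodule.smul_mem _ _ (htr i)
  set B := Algebra.traceForm ℚ K with hBdef
  have hB : B.Nondegenerate := traceForm_nondegenerate ℚ K
  set L := Submodule.span ℤ (Set.range pb.basis) with hLdef
  have hle : Subalgebra.toSubmodule (Algebra.adjoin ℤ {α}) ≤ B.dualSubmodule L := by
    intro x hx
    rw [Subalgebra.mem_toSubmodule, Algebra.adjoin_singleton_eq_range_aeval,
      AlgHom.mem_range] at hx
    obtain ⟨q, rfl⟩ := hx
    intro y hy
    induction hy using Submodule.span_induction with
    | mem y hy =>
      obtain ⟨i, rfl⟩ := hy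
      have h1 : (Polynomial.aeval α q) * pb.basis i
          = Polynomial.aeval α (q * Polynomial.X ^ (i : ℕ)) := by
        rw [hpb, map_mul, map_pow, Polynomial.aeval_X]
      show Algebra.traceForm ℚ K _ _ ∈ _
      rw [Algebra.traceForm_apply, h1]
      exact key _
    | zero => simp
    | add u v hu hv h1 h2 => simpa [map_add] using Submodule.add_mem _ h1 h2
    | smul c u hu h1 =>
      rw [map_zsmul]
      exact Submodule.smul_mem _ c h1
  have hfgP : (B.dualSubmodule L).FG := by
    rw [hLdef, LinearMap.BilinForm.dualSubmodule_span_of_basis B hB pb.basis]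
    exact Submodule.fg_span (Set.finite_range _)
  have hfg : (Subalgebra.toSubmodule (Algebra.adjoin ℤ {α})).FG := by
    haveI : IsNoetherian ℤ (B.dualSubmodule L) :=
      isNoetherian_of_fg_of_noetherian _ hfgP
    have h2 := (IsNoetherian.noetherian
      ((Subalgebra.toSubmodule (Algebra.adjoin ℤ {α})).comap
        (B.dualSubmodule L).subtype)).map (B.dualSubmodule L).subtype
    rwa [Submodule.map_comap_subtype, inf_eq_right.mpr hle] at h2
  exact IsIntegral.of_mem_of_fg _ hfg α (Algebra.self_mem_adjoin_singleton ℤ α)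
end

section
/- Let K be a number field and q(x) ∈ O_K[x] a non-constant polynomial with q(0) a unit times content 1, factoring over an extension as q(x) = ∏_{i=0}^d (c_i x − a_i) with all c_i ≠ 0, and let β ∈ O_K be nonzero. Then there exist a prime ideal 𝔓 of (a splitting field of q over) K and an algebraic integer γ avoiding any prescribed finite set of elements such that |q(γ)|_𝔓 < |β|_𝔓. -/
open NumberField IsDedekindDomain Polynomial

/-!
Clear denominators: for some `s ≠ 0` in `𝓞 L`, `s ^ n * q(γ) = ∏ (C_i γ - A_i)` with `C_i, A_i`
integral and `C_0 ≠ 0`. Since `𝓞 L` is a Jacobson domain (it is integral over `ℤ`), some maximal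
ideal `𝔓` avoids `s * C_0 * β`. Then `C_0` is invertible modulo `𝔓`, and the residue class of
`A_0 / C_0`, being infinite, contains some `γ ∉ S`. The factor `C_0 γ - A_0` lies in `𝔓` while
`s` does not, so `q(γ) ∈ 𝔓 ∌ β`.
-/

instance Int.isJacobsonRing : IsJacobsonRing ℤ := by
  refine isJacobsonRing_iff_prime_eq.mpr fun P hP ↦ ?_
  by_cases hP0 : P = ⊥
  · subst hP0
    refine le_antisymm (fun x hx ↦ ?_) Ideal.le_jacobson
    have hplus := Int.isUnit_iff.mp (Ideal.mem_jacobson_bot.mp hx 1)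
    have hminus := Int.isUnit_iff.mp (Ideal.mem_jacobson_bot.mp hx (-1))
    rw [Ideal.mem_bot]
    omega
  · exact Ideal.jacobson_eq_self_of_isMaximal (H := hP.isMaximal hP0)

instance NumberField.RingOfIntegers.isJacobsonRing (L : Type*) [Field L] [NumberField L] :
    IsJacobsonRing (𝓞 L) :=
  isJacobsonRing_of_isIntegral (R := ℤ)

section

variable {R : Type*} [CommRing R]

theorem Ideal.exists_isMaximal_notMem_of_ne_zero [IsDomain R] [IsJacobsonRing R] {x : R}
    (hx : x ≠ 0) : ∃ M : Ideal R, M.IsMaximal ∧ x ∉ M := by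
  have hjac : (⊥ : Ideal R).jacobson = ⊥ := IsJacobsonRing.out' ⊥ Ideal.isPrime_bot.isRadical
  have hxjac : x ∉ (⊥ : Ideal R).jacobson := by rwa [hjac, Ideal.mem_bot]
  rw [Ideal.jacobson, Ideal.mem_sInf] at hxjac
  push Not at hxjac
  obtain ⟨M, ⟨-, hM⟩, hxM⟩ := hxjac
  exact ⟨M, hM, hxM⟩

theorem IsDedekindDomain.HeightOneSpectrum.exists_notMem_of_ne_zero [IsDedekindDomain R]
    [IsJacobsonRing R] (hR : ¬IsField R) {x : R} (hx : x ≠ 0) :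
    ∃ v : HeightOneSpectrum R, x ∉ v.asIdeal := by
  obtain ⟨M, hM, hxM⟩ := Ideal.exists_isMaximal_notMem_of_ne_zero hx
  exact ⟨⟨M, hM.isPrime, Ring.ne_bot_of_isMaximal_of_not_isField hM hR⟩, hxM⟩

theorem Ideal.exists_sub_mem_notMem_finset [IsDomain R] [Infinite R] {I : Ideal R} (hI : I ≠ ⊥)
    (r : R) (S : Finset R) : ∃ γ ∉ S, γ - r ∈ I := by
  obtain ⟨p, hpI, hp0⟩ := (Submodule.ne_bot_iff I).mp hI
  have hinf : {γ : R | γ - r ∈ I}.Infinite := by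
    refine Set.infinite_of_injective_forall_mem (f := fun t : R ↦ r + p * t) ?_ fun t ↦ ?_
    · intro t t' h
      simpa [mul_right_inj' hp0] using h
    · simpa using I.mul_mem_right t hpI
  obtain ⟨γ, hγI, hγS⟩ := hinf.exists_notMem_finset S
  exact ⟨γ, hγS, hγI⟩

theorem Ideal.exists_mul_sub_mem_notMem_finset [IsDomain R] [Infinite R] {M : Ideal R}
    (hM : M.IsMaximal) (hM0 : M ≠ ⊥) {c : R} (hc : c ∉ M) (a : R) (S : Finset R) :
    ∃ γ ∉ S, c * γ - a ∈ M := by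
  obtain ⟨d, m, hm, hdc⟩ := hM.exists_inv hc
  obtain ⟨γ, hγS, hγ⟩ := Ideal.exists_sub_mem_notMem_finset hM0 (d * a) S
  refine ⟨γ, hγS, ?_⟩
  have hsplit : c * γ - a = c * (γ - d * a) - m * a := by
    linear_combination a * hdc
  rw [hsplit]
  exact M.sub_mem (M.mul_mem_left c hγ) (M.mul_mem_right a hm)

variable {L : Type*} [Field L] [Algebra R L] [IsFractionRing R L]

theorem exists_pow_mul_eval_eq_prod_of_map_eq_prod [IsDomain R] (p : R[X]) {n : ℕ}
    (c a : Fin n → L) (hfact : p.map (algebraMap R L) = ∏ i, (C (c i) * X - C (a i))) :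
    ∃ s : R, s ≠ 0 ∧ ∃ C' A : Fin n → R,
      (∀ i, algebraMap R L (C' i) = algebraMap R L s * c i) ∧
      ∀ γ : R, s ^ n * p.eval γ = ∏ i, (C' i * γ - A i) := by
  obtain ⟨b, hb⟩ := IsLocalization.exist_integer_multiples (nonZeroDivisors R)
    (Finset.univ : Finset (Fin n ⊕ Fin n)) (Sum.elim c a)
  choose C' hC' using fun i ↦ hb (Sum.inl i) (Finset.mem_univ _)
  choose A hA using fun i ↦ hb (Sum.inr i) (Finset.mem_univ _)
  simp only [Sum.elim_inl, Sum.elim_inr, Algebra.smul_def] at hC' hA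
  refine ⟨b, nonZeroDivisors.coe_ne_zero b, C', A, hC', fun γ ↦ IsFractionRing.injective R L ?_⟩
  have hp := congrArg (eval (algebraMap R L γ)) hfact
  rw [eval_map_algebraMap, aeval_algebraMap_apply] at hp
  rw [map_mul, map_pow, ← coe_aeval_eq_eval, hp]
  simp only [map_prod, map_sub, map_mul, hC', hA, eval_prod, eval_sub, eval_mul, eval_C, eval_X,
    mul_assoc, ← mul_sub, Finset.prod_mul_distrib, Finset.prod_const, Finset.card_univ,
    Fintype.card_fin]

theorem IsDedekindDomain.HeightOneSpectrum.exists_eval_mem_notMem [IsDedekindDomain R]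
    [IsJacobsonRing R] [Infinite R] (hR : ¬IsField R) (p : R[X]) {n : ℕ} (c a : Fin n → L)
    (hfact : p.map (algebraMap R L) = ∏ i, (C (c i) * X - C (a i))) {i₀ : Fin n}
    (hc : c i₀ ≠ 0) {β : R} (hβ : β ≠ 0) (S : Finset R) :
    ∃ v : HeightOneSpectrum R, ∃ γ ∉ S, p.eval γ ∈ v.asIdeal ∧ β ∉ v.asIdeal := by
  obtain ⟨s, hs, C', A, hC', hprod⟩ := exists_pow_mul_eval_eq_prod_of_map_eq_prod p c a hfact
  have hC'0 : C' i₀ ≠ 0 := by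
    intro h
    have h' := hC' i₀
    rw [h, map_zero, eq_comm, mul_eq_zero, IsFractionRing.to_map_eq_zero_iff] at h'
    exact h'.elim hs hc
  obtain ⟨v, hv⟩ := exists_notMem_of_ne_zero hR (mul_ne_zero (mul_ne_zero hs hC'0) hβ)
  simp only [v.isPrime.mul_mem_iff_mem_or_mem, not_or] at hv
  obtain ⟨⟨hsv, hC'v⟩, hβv⟩ := hv
  obtain ⟨γ, hγS, hγ⟩ :=
    Ideal.exists_mul_sub_mem_notMem_finset v.isMaximal v.ne_bot hC'v (A i₀) S
  refine ⟨v, γ, hγS, ?_, hβv⟩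
  have hmem : s ^ n * p.eval γ ∈ v.asIdeal :=
    hprod γ ▸ Ideal.prod_mem _ (Finset.mem_univ i₀) hγ
  exact (v.isPrime.mem_or_mem hmem).resolve_left fun h ↦ hsv (v.isPrime.mem_of_pow_mem n h)

end

theorem denominator_small_value_general (K L : Type*) [Field K] [NumberField K]
    [Field L] [NumberField L] [Algebra K L]
    (q : Polynomial (𝓞 K)) (hq : 0 < q.natDegree)
    (c a : Fin q.natDegree → L) (hc : ∀ i, c i ≠ 0)
    (hfact : q.map (algebraMap (𝓞 K) L) =
      ∏ i, (Polynomial.C (c i) * Polynomial.X - Polynomial.C (a i)))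
    (β : 𝓞 K) (hβ : β ≠ 0) (S : Finset (𝓞 L)) :
    ∃ 𝔓 : HeightOneSpectrum (𝓞 L), ∃ γ : 𝓞 L, γ ∉ S ∧
      𝔓.valuation L (algebraMap (𝓞 L) L ((q.map (algebraMap (𝓞 K) (𝓞 L))).eval γ)) <
        𝔓.valuation L (algebraMap K L (algebraMap (𝓞 K) K β)) := by
  have hfact' : (q.map (algebraMap (𝓞 K) (𝓞 L))).map (algebraMap (𝓞 L) L) =
      ∏ i, (C (c i) * X - C (a i)) := by
    rw [map_map, ← IsScalarTower.algebraMap_eq, hfact]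
  have hβ' : algebraMap (𝓞 K) (𝓞 L) β ≠ 0 :=
    (map_ne_zero_iff _ (FaithfulSMul.algebraMap_injective (𝓞 K) (𝓞 L))).mpr hβ
  obtain ⟨v, γ, hγS, hqγ, hβv⟩ := HeightOneSpectrum.exists_eval_mem_notMem
    (RingOfIntegers.not_isField L) _ c a hfact' (hc ⟨0, hq⟩) hβ' S
  refine ⟨v, γ, hγS, ?_⟩
  rw [← IsScalarTower.algebraMap_apply, IsScalarTower.algebraMap_apply (𝓞 K) (𝓞 L) L,
    v.valuation_of_algebraMap, v.valuation_of_algebraMap,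
    HeightOneSpectrum.intValuation_eq_one_iff.mpr hβv]
  exact (v.intValuation_lt_one_iff_mem _).mpr hqγ

/-- Key step in the rational-function theorem: let `q ∈ O_K[x]` be non-constant with
`q(0)` a unit, splitting over an extension `L` of `K` as `∏ (c_i x − a_i)` with all
`c_i ≠ 0`, and let `β ∈ O_K` be nonzero. Then, avoiding any prescribed finite set
`S`, there are a prime ideal `𝔓` of `O_L` and an algebraic integer `γ ∈ O_L`
with `|q(γ)|_𝔓 < |β|_𝔓` (multiplicatively, `v_𝔓(q(γ)) < v_𝔓(β)`). -/
theorem denominator_small_value (K L : Type*) [Field K] [NumberField K]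
    [Field L] [NumberField L] [Algebra K L]
    (q : Polynomial (𝓞 K)) (hq : 0 < q.natDegree) (hq0 : IsUnit (q.coeff 0))
    (c a : Fin q.natDegree → L) (hc : ∀ i, c i ≠ 0)
    (hfact : q.map (algebraMap (𝓞 K) L) =
      ∏ i, (Polynomial.C (c i) * Polynomial.X - Polynomial.C (a i)))
    (β : 𝓞 K) (hβ : β ≠ 0) (S : Finset (𝓞 L)) :
    ∃ 𝔓 : HeightOneSpectrum (𝓞 L), ∃ γ : 𝓞 L, γ ∉ S ∧
      𝔓.valuation L (algebraMap (𝓞 L) L ((q.map (algebraMap (𝓞 K) (𝓞 L))).eval γ)) <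
        𝔓.valuation L (algebraMap K L (algebraMap (𝓞 K) K β)) :=
  denominator_small_value_general K L q hq c a hc hfact β hβ S
end
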